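/- Let V, V′ ⊆ ℝ^n each be a 2-dimensional totally nonnegative subspace which is orthodox or deviant, with chosen fundamental dominoes, and let v ∈ V and v′ ∈ V′. Let D be the multiset of nonzero dominoes among the eight entries of Dom_V(v) and Dom_{V′}(v′), so that the sum of the elements of D equals the vector (v + v′) with its n-th coordinate replaced by 0. Then for any I ⊆ {1, …, n}, every I-alternating domino sequence for this sum with respect to D in which every domino of D appears is obtained by shuffling the sequences Dom_V(v) and Dom_{V′}(v′) and deleting all zero dominoes. -/

import Mathlib

/-!
Since `L` uses every domino of `D` exactly once, it is a shuffle of the two filtered sequences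
`Dom_V(v)`, `Dom_{V'}(v')` as soon as it never reverses two dominoes taken from the same one.
Along an alternating sequence the witnessing coordinates `i_1 < ⋯ < i_k` increase and each
domino is nonzero at its own coordinate, so a domino of larger index cannot come first. Two
dominoes with the same index `i` must be consecutive, at coordinates `i` and `i + 1`; comparing
the sum with the signs at these two coordinates makes the `2 × 2` minor of the two dominoes on
columns `i, i + 1` negative. Total nonnegativity of `V` makes that minor nonnegative for the
only pairs of fundamental dominoes that can share an index, `(d2, d3)` in the orthodox case and
`(d3, d4)` in the deviant case.
-/

/-- `d` is an `i`-domino (0-based indices). -/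
def IsDominoAt {n : ℕ} (i : Fin n) (d : Fin n → ℝ) : Prop :=
  if h : (i : ℕ) + 1 < n then
    0 < d i * d ⟨(i : ℕ) + 1, h⟩ ∧
      ∀ j : Fin n, (j : ℕ) ≠ (i : ℕ) → (j : ℕ) ≠ (i : ℕ) + 1 → d j = 0
  else
    d i ≠ 0 ∧ ∀ j : Fin n, j ≠ i → d j = 0

/-- A nonzero domino. -/
def IsDomino {n : ℕ} (d : Fin n → ℝ) : Prop := ∃ i : Fin n, IsDominoAt i d

/-- A positive domino with index `i`. -/
def IsPosDominoAt {n : ℕ} (i : Fin n) (d : Fin n → ℝ) : Prop :=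
  IsDominoAt i d ∧ 0 < d i

/-- `barVec v` is `v` with its last coordinate replaced by `0`. -/
def barVec {n : ℕ} (v : Fin n → ℝ) : Fin n → ℝ :=
  fun j => if (j : ℕ) = n - 1 then 0 else v j

/-- All maximal minors of `A` are nonnegative. -/
def MinorsNonneg {k n : ℕ} (A : Matrix (Fin k) (Fin n) ℝ) : Prop :=
  ∀ f : Fin k → Fin n, StrictMono f → 0 ≤ (A.submatrix id f).det

/-- All maximal (`a × a`) minors of the `a × n` matrix `Z` are positive. -/
def MinorsPos {a n : ℕ} (Z : Matrix (Fin a) (Fin n) ℝ) : Prop :=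
  ∀ f : Fin a → Fin n, StrictMono f → 0 < (Z.submatrix id f).det

/-- `V` is a `k`-dimensional totally nonnegative subspace of `ℝ^n`. -/
def IsTNNSubspace (k n : ℕ) (V : Submodule ℝ (Fin n → ℝ)) : Prop :=
  ∃ A : Matrix (Fin k) (Fin n) ℝ,
    LinearIndependent ℝ (fun i => A i) ∧
    Submodule.span ℝ (Set.range fun i => A i) = V ∧
    MinorsNonneg A

/-- `V` is orthodox with standard basis vectors `d, e` and fundamental dominoes
`d1, d2, d3, d4`: the `dᵢ` are linearly independent positive dominoes with 0-based
indices `i1 + 1 < i2 ≤ i3 < i4 - 1` and `i4 ≤ n - 3` (1-based: `i_4 ≤ n - 2`),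
`V = span{d, e}`, `d̄ = d1 + d2` with `d` negative in its last coordinate, and
`ē = d3 + d4` with `e` positive in its last coordinate. -/
def OrthodoxWith {n : ℕ} (V : Submodule ℝ (Fin n → ℝ))
    (d e d1 d2 d3 d4 : Fin n → ℝ) : Prop :=
  (∃ i1 i2 i3 i4 : Fin n,
    IsPosDominoAt i1 d1 ∧ IsPosDominoAt i2 d2 ∧ IsPosDominoAt i3 d3 ∧
    IsPosDominoAt i4 d4 ∧
    (i1 : ℕ) + 1 < (i2 : ℕ) ∧ (i2 : ℕ) ≤ (i3 : ℕ) ∧ (i3 : ℕ) + 1 < (i4 : ℕ) ∧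
    (i4 : ℕ) + 3 ≤ n) ∧
  LinearIndependent ℝ ![d1, d2, d3, d4] ∧
  V = Submodule.span ℝ {d, e} ∧
  barVec d = d1 + d2 ∧ (∀ j : Fin n, (j : ℕ) = n - 1 → d j < 0) ∧
  barVec e = d3 + d4 ∧ (∀ j : Fin n, (j : ℕ) = n - 1 → 0 < e j)

/-- `V` is deviant with standard basis vectors `d, e` and fundamental dominoes
`d1, d2, d3, d4`: the `dᵢ` are linearly independent positive dominoes with 0-based
indices `i1 < i2`, `i2 + 1 < i3 ≤ i4 ≤ n - 3` (1-based: `i_4 ≤ n - 2`),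
`V = span{d, e}`, `d̄ = d1 - d4` with `d` negative in its last coordinate, and
`e = d1 + d2 + d3`. -/
def DeviantWith {n : ℕ} (V : Submodule ℝ (Fin n → ℝ))
    (d e d1 d2 d3 d4 : Fin n → ℝ) : Prop :=
  (∃ i1 i2 i3 i4 : Fin n,
    IsPosDominoAt i1 d1 ∧ IsPosDominoAt i2 d2 ∧ IsPosDominoAt i3 d3 ∧
    IsPosDominoAt i4 d4 ∧
    (i1 : ℕ) < (i2 : ℕ) ∧ (i2 : ℕ) + 1 < (i3 : ℕ) ∧ (i3 : ℕ) ≤ (i4 : ℕ) ∧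
    (i4 : ℕ) + 3 ≤ n) ∧
  LinearIndependent ℝ ![d1, d2, d3, d4] ∧
  V = Submodule.span ℝ {d, e} ∧
  barVec d = d1 - d4 ∧ (∀ j : Fin n, (j : ℕ) = n - 1 → d j < 0) ∧
  e = d1 + d2 + d3

/-- `V` is orthodox (for some choice of data). -/
def IsOrthodox {n : ℕ} (V : Submodule ℝ (Fin n → ℝ)) : Prop :=
  ∃ d e d1 d2 d3 d4 : Fin n → ℝ, OrthodoxWith V d e d1 d2 d3 d4

/-- `V` is deviant (for some choice of data). -/
def IsDeviant {n : ℕ} (V : Submodule ℝ (Fin n → ℝ)) : Prop :=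
  ∃ d e d1 d2 d3 d4 : Fin n → ℝ, DeviantWith V d e d1 d2 d3 d4

def NonnegVec {n : ℕ} (d : Fin n → ℝ) : Prop := ∀ j, 0 ≤ d j

def NonposVec {n : ℕ} (d : Fin n → ℝ) : Prop := ∀ j, d j ≤ 0

/-- Two dominoes have opposite signs. -/
def OppSign {n : ℕ} (d e : Fin n → ℝ) : Prop :=
  (NonnegVec d ∧ NonposVec e) ∨ (NonposVec d ∧ NonnegVec e)

/-- `L` is an `I`-alternating domino sequence for `v` with respect to `D`. -/
def IsAltDominoSeq {n : ℕ} (D : Multiset (Fin n → ℝ)) (v : Fin n → ℝ)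
    (I : Finset (Fin n)) (L : List (Fin n → ℝ)) : Prop :=
  L.length = I.card ∧
  (↑L : Multiset (Fin n → ℝ)) ≤ D ∧
  (∀ d ∈ L, IsDomino d) ∧
  (∀ (j : ℕ) (hj : j < L.length) (hj' : j < I.card),
    0 < v (I.orderEmbOfFin rfl ⟨j, hj'⟩) *
        L.get ⟨j, hj⟩ (I.orderEmbOfFin rfl ⟨j, hj'⟩)) ∧
  (∀ (j : ℕ) (h1 : j < L.length) (h2 : j + 1 < L.length),
    OppSign (L.get ⟨j, h1⟩) (L.get ⟨j + 1, h2⟩))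

/-- `Shuffle l1 l2 l`: the list `l` is an interleaving of `l1` and `l2`,
preserving the relative order within each. -/
inductive Shuffle {α : Type*} : List α → List α → List α → Prop
  | nil : Shuffle [] [] []
  | left (a : α) (l1 l2 l : List α) : Shuffle l1 l2 l → Shuffle (a :: l1) l2 (a :: l)
  | right (a : α) (l1 l2 l : List α) : Shuffle l1 l2 l → Shuffle l1 (a :: l2) (a :: l)

/-- The sequence `Dom_V(v) = (α₀ d1, α₁ d2, α₂ d3, α₃ d4)` as a list. -/
def domSeq {n : ℕ} (α : Fin 4 → ℝ) (d1 d2 d3 d4 : Fin n → ℝ) : List (Fin n → ℝ) :=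
  [α 0 • d1, α 1 • d2, α 2 • d3, α 3 • d4]

open scoped List

theorem List.sum_filter_ne_zero {M : Type*} [AddMonoid M] [DecidableEq M] (l : List M) :
    (l.filter fun x => decide (x ≠ 0)).sum = l.sum := by
  induction l with
  | nil => rfl
  | cons x l ih => by_cases hx : x = 0 <;> simp_all

theorem List.exists_lt_of_pair_sublist {α : Type*} {a b : α} {l : List α} (h : [a, b] <+ l) :
    ∃ i j : Fin l.length, i < j ∧ l.get i = a ∧ l.get j = b := by
  obtain ⟨f, hf⟩ := List.sublist_iff_exists_fin_orderEmbedding_get_eq.mp h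
  exact ⟨f 0, f 1, f.strictMono (by simp), (hf 0).symm, (hf 1).symm⟩

theorem List.exists_inversion_of_mem {α : Type*} {x : α} {l₁ l : List α} (hx : x ∈ l₁)
    (hhead : l₁.head? ≠ some x) (hsub : l₁ ⊆ x :: l) :
    ∃ a, [a, x] <+ l₁ ∧ [x, a] <+ x :: l := by
  obtain _ | ⟨a, l₁⟩ := l₁
  · simp at hx
  have hax : a ≠ x := by simpa using hhead
  have hxl₁ : x ∈ l₁ := by simpa [hax.symm] using hx
  have hal : a ∈ l := by simpa [hax] using hsub List.mem_cons_self
  exact ⟨a, (List.singleton_sublist.mpr hxl₁).cons_cons a,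
    (List.singleton_sublist.mpr hal).cons_cons x⟩

namespace Shuffle

variable {α : Type*}

theorem nil_left : ∀ l : List α, Shuffle [] l l
  | [] => .nil
  | a :: l => .right a [] l l (nil_left l)

theorem symm {l₁ l₂ l : List α} (h : Shuffle l₁ l₂ l) : Shuffle l₂ l₁ l := by
  induction h with
  | nil => exact .nil
  | left a _ _ _ _ ih => exact .right a _ _ _ ih
  | right a _ _ _ _ ih => exact .left a _ _ _ ih

theorem append_left {l₁ l₂ l : List α} (h : Shuffle l₁ l₂ l) :
    ∀ l₀ : List α, Shuffle (l₀ ++ l₁) l₂ (l₀ ++ l)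
  | [] => h
  | a :: l₀ => .left a _ _ _ (h.append_left l₀)

theorem append (l₁ l₂ : List α) : Shuffle l₁ l₂ (l₁ ++ l₂) := by
  simpa using (nil_left l₂).append_left l₁

theorem cons_inv {l₁ l₂ l : List α} {x : α} (h : Shuffle l₁ l₂ (x :: l)) :
    (∃ l₁', l₁ = x :: l₁' ∧ Shuffle l₁' l₂ l) ∨ (∃ l₂', l₂ = x :: l₂' ∧ Shuffle l₁ l₂' l) := by
  cases h with
  | left _ l₁' _ _ h => exact .inl ⟨l₁', rfl, h⟩
  | right _ _ l₂' _ h => exact .inr ⟨l₂', rfl, h⟩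

theorem exists_filter_eq (p : α → Bool) {l : List α} :
    ∀ {l₁ l₂ : List α}, Shuffle (l₁.filter p) (l₂.filter p) l →
      ∃ m, Shuffle l₁ l₂ m ∧ m.filter p = l := by
  induction l with
  | nil =>
    intro l₁ l₂ h
    refine ⟨l₁ ++ l₂, append l₁ l₂, ?_⟩
    generalize hm₁ : l₁.filter p = m₁, hm₂ : l₂.filter p = m₂ at h
    cases h
    simp [List.filter_append, hm₁, hm₂]
  | cons x l ih =>
    have key : ∀ {l₁ l₂ l₁' : List α}, l₁.filter p = x :: l₁' →
        Shuffle l₁' (l₂.filter p) l → ∃ m, Shuffle l₁ l₂ m ∧ m.filter p = x :: l := by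
      intro l₁ l₂ l₁' hl₁ h
      obtain ⟨pre, suf, rfl, hpre, hx, rfl⟩ := List.filter_eq_cons_iff.mp hl₁
      obtain ⟨m, hm, hmp⟩ := ih h
      refine ⟨pre ++ x :: m, (Shuffle.left x _ _ _ hm).append_left pre, ?_⟩
      simp [List.filter_append, List.filter_eq_nil_iff.mpr hpre, hx, hmp]
    intro l₁ l₂ h
    rcases h.cons_inv with ⟨l₁', hl₁, h⟩ | ⟨l₂', hl₂, h⟩
    · exact key hl₁ h
    · obtain ⟨m, hm, hmp⟩ := key hl₂ h.symm
      exact ⟨m, hm.symm, hmp⟩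

theorem of_perm_of_forall_not_sublist {l : List α} :
    ∀ {l₁ l₂ : List α}, l.Perm (l₁ ++ l₂) →
      (∀ a b, [a, b] <+ l₁ → ¬ [b, a] <+ l) → (∀ a b, [a, b] <+ l₂ → ¬ [b, a] <+ l) →
      Shuffle l₁ l₂ l := by
  induction l with
  | nil =>
    intro l₁ l₂ hp _ _
    obtain ⟨rfl, rfl⟩ := List.append_eq_nil_iff.mp (List.perm_nil.mp hp.symm)
    exact .nil
  | cons x l ih =>
    intro l₁ l₂ hp h₁ h₂
    have h_tail : ∀ {l' : List α}, (∀ a b, [a, b] <+ l' → ¬ [b, a] <+ x :: l) →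
        ∀ a b, [a, b] <+ l' → ¬ [b, a] <+ l :=
      fun h a b hab hba => h a b hab (hba.cons x)
    have h_head : ∀ {l' : List α}, (∀ a b, [a, b] <+ x :: l' → ¬ [b, a] <+ x :: l) →
        ∀ a b, [a, b] <+ l' → ¬ [b, a] <+ l :=
      fun h a b hab hba => h a b (hab.cons x) (hba.cons x)
    by_cases hx₁ : l₁.head? = some x
    · obtain ⟨l₁', rfl⟩ : ∃ l₁', l₁ = x :: l₁' := by
        simpa [List.head?_eq_some_iff] using hx₁
      exact .left x _ _ _ (ih hp.cons_inv (h_head h₁) (h_tail h₂))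
    by_cases hx₂ : l₂.head? = some x
    · obtain ⟨l₂', rfl⟩ : ∃ l₂', l₂ = x :: l₂' := by
        simpa [List.head?_eq_some_iff] using hx₂
      exact .right x _ _ _ (ih (hp.trans List.perm_middle).cons_inv (h_tail h₁) (h_head h₂))
    exfalso
    have hsub : l₁ ++ l₂ ⊆ x :: l := hp.symm.subset
    rcases List.mem_append.mp (hp.subset List.mem_cons_self) with hx | hx
    · obtain ⟨a, hax, hxa⟩ := List.exists_inversion_of_mem hx hx₁ fun y hy => hsub (by simp [hy])
      exact h₁ a x hax hxa
    · obtain ⟨a, hax, hxa⟩ := List.exists_inversion_of_mem hx hx₂ fun y hy => hsub (by simp [hy])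
      exact h₂ a x hax hxa

end Shuffle

theorem StrictMono.val_add_two_le {k n : ℕ} {f : Fin k → Fin n} (hf : StrictMono f)
    {s t : Fin k} (h : (s : ℕ) + 2 ≤ t) : (f s : ℕ) + 2 ≤ f t := by
  have h₁ : f s < f ⟨s + 1, by omega⟩ := hf (Fin.lt_def.mpr (Nat.lt_succ_self _))
  have h₂ : f ⟨s + 1, by omega⟩ < f t := hf (Fin.lt_def.mpr (by simp only; omega))
  rw [Fin.lt_def] at h₁ h₂
  omega

theorem mul_lt_mul_of_alternating {p P q Q : ℝ} (hp : 0 < p * P) (hq : 0 < q * Q)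
    (hpq : p * q ≤ 0) (h₁ : 0 < (p + q) * p) (h₂ : 0 < (Q + P) * Q) : p * Q < q * P := by
  wlog hp₀ : 0 < p generalizing p P q Q
  · have := this (p := -p) (P := -P) (q := -q) (Q := -Q) (by linarith) (by linarith)
      (by linarith) (by linarith) (by linarith) (by nlinarith [left_ne_zero_of_mul hp.ne'])
    linarith
  have hP : 0 < P := pos_of_mul_pos_right hp hp₀.le
  have hq₀ : q < 0 :=
    lt_of_le_of_ne (nonpos_of_mul_nonpos_right hpq hp₀) (left_ne_zero_of_mul hq.ne')
  have hQ : Q < 0 := neg_of_mul_pos_right hq hq₀.le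
  have e₁ : -q < p := by nlinarith
  have e₂ : P < -Q := by nlinarith
  nlinarith [mul_lt_mul'' e₁ e₂ (by linarith) hP.le]

section Domino

variable {n : ℕ}

theorem barVec_add (v w : Fin n → ℝ) : barVec (v + w) = barVec v + barVec w := by
  ext j
  by_cases h : (j : ℕ) = n - 1 <;> simp [barVec, h]

theorem IsDominoAt.apply_eq_zero {i : Fin n} {d : Fin n → ℝ} (h : IsDominoAt i d)
    {c : Fin n} (h₁ : (c : ℕ) ≠ i) (h₂ : (c : ℕ) ≠ i + 1) : d c = 0 := by
  unfold IsDominoAt at h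
  split at h
  · exact h.2 c h₁ h₂
  · exact h.2 c (Fin.val_ne_iff.mp h₁)

theorem IsDominoAt.val_eq_or_of_apply_ne_zero {i : Fin n} {d : Fin n → ℝ}
    (h : IsDominoAt i d) {c : Fin n} (hc : d c ≠ 0) : (c : ℕ) = i ∨ (c : ℕ) = i + 1 := by
  by_contra! h'
  exact hc (h.apply_eq_zero h'.1 h'.2)

theorem IsDominoAt.mul_pos {i : Fin n} {d : Fin n → ℝ} (h : IsDominoAt i d) {c : Fin n}
    (hc : (c : ℕ) = i + 1) : 0 < d i * d c := by
  have hlt : (i : ℕ) + 1 < n := hc ▸ c.isLt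
  obtain rfl : c = ⟨i + 1, hlt⟩ := Fin.ext hc
  unfold IsDominoAt at h
  rw [dif_pos hlt] at h
  exact h.1

theorem IsDominoAt.smul {i : Fin n} {d : Fin n → ℝ} (h : IsDominoAt i d) {a : ℝ}
    (ha : a ≠ 0) : IsDominoAt i (a • d) := by
  unfold IsDominoAt at h ⊢
  split_ifs at h ⊢
  · refine ⟨?_, fun j h₁ h₂ => by simp [h.2 j h₁ h₂]⟩
    simpa [mul_mul_mul_comm] using _root_.mul_pos (mul_self_pos.mpr ha) h.1
  · exact ⟨smul_ne_zero ha h.1, fun j hj => by simp [h.2 j hj]⟩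

theorem OppSign.mul_nonpos {x y : Fin n → ℝ} (h : OppSign x y) (a b : Fin n) :
    x a * y b ≤ 0 := by
  rcases h with ⟨hx, hy⟩ | ⟨hx, hy⟩
  · exact mul_nonpos_of_nonneg_of_nonpos (hx a) (hy b)
  · exact mul_nonpos_of_nonpos_of_nonneg (hx a) (hy b)

/-- `c t` is the coordinate `i_t` at which the `t`-th domino of `L` is compared with `w`. -/
structure IsAltAlong (w : Fin n → ℝ) (L : List (Fin n → ℝ)) (c : Fin L.length → Fin n) :
    Prop where
  strictMono : StrictMono c
  isDomino : ∀ t, IsDomino (L.get t)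
  sign_pos : ∀ t, 0 < w (c t) * L.get t (c t)
  oppSign : ∀ s t : Fin L.length, (t : ℕ) = s + 1 → OppSign (L.get s) (L.get t)

theorem IsAltDominoSeq.isAltAlong {D : Multiset (Fin n → ℝ)} {w : Fin n → ℝ}
    {I : Finset (Fin n)} {L : List (Fin n → ℝ)} (h : IsAltDominoSeq D w I L) :
    IsAltAlong w L fun t => I.orderEmbOfFin rfl (Fin.cast h.1 t) where
  strictMono := (I.orderEmbOfFin rfl).strictMono.comp (Fin.cast_strictMono h.1)
  isDomino t := h.2.2.1 _ (List.get_mem L t)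
  sign_pos t := h.2.2.2.1 t t.isLt _
  oppSign s t hst := by
    obtain ⟨t, ht⟩ := t
    subst hst
    exact h.2.2.2.2 s s.isLt ht

namespace IsAltAlong

variable {w : Fin n → ℝ} {L : List (Fin n → ℝ)} {c : Fin L.length → Fin n}

theorem apply_ne_zero (h : IsAltAlong w L c) (t : Fin L.length) : L.get t (c t) ≠ 0 :=
  fun h₀ => by simpa [h₀] using h.sign_pos t

theorem adjacent_of_apply_ne_zero (h : IsAltAlong w L c) {s t : Fin L.length}
    (hst : L.get t (c s) ≠ 0) : (t : ℕ) ≤ s + 1 ∧ (s : ℕ) ≤ t + 1 := by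
  obtain ⟨m, hm⟩ := h.isDomino t
  have hs := hm.val_eq_or_of_apply_ne_zero hst
  have ht := hm.val_eq_or_of_apply_ne_zero (h.apply_ne_zero t)
  constructor <;> by_contra! hlt
  · have := h.strictMono.val_add_two_le (s := s) (t := t) (by omega)
    omega
  · have := h.strictMono.val_add_two_le (s := t) (t := s) (by omega)
    omega

theorem index_le_of_lt (h : IsAltAlong w L c) {r r' : Fin L.length} (hrr : r < r')
    {m m' : Fin n} (hm : IsDominoAt m (L.get r)) (hm' : IsDominoAt m' (L.get r')) :
    (m : ℕ) ≤ m' := by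
  have h₁ := hm.val_eq_or_of_apply_ne_zero (h.apply_ne_zero r)
  have h₂ := hm'.val_eq_or_of_apply_ne_zero (h.apply_ne_zero r')
  have := Fin.lt_def.mp (h.strictMono hrr)
  omega

theorem eq_succ_of_same_index (h : IsAltAlong w L c) {r r' : Fin L.length} (hrr : r < r')
    {i : Fin n} (hr : IsDominoAt i (L.get r)) (hr' : IsDominoAt i (L.get r')) :
    (r' : ℕ) = r + 1 ∧ c r = i ∧ (c r' : ℕ) = i + 1 := by
  have h₁ := hr.val_eq_or_of_apply_ne_zero (h.apply_ne_zero r)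
  have h₂ := hr'.val_eq_or_of_apply_ne_zero (h.apply_ne_zero r')
  have hc := Fin.lt_def.mp (h.strictMono hrr)
  have hnot : ¬ (r : ℕ) + 2 ≤ r' := fun h₂ => by
    have := h.strictMono.val_add_two_le h₂
    omega
  have := Fin.lt_def.mp hrr
  exact ⟨by omega, Fin.ext (by omega), by omega⟩

/-- At the coordinate `c s` only `L[s]` and its two neighbours can be nonzero, and the
neighbours have the sign opposite to that of `L[s]`. -/
theorem mul_apply_le (h : IsAltAlong w L c) (hsum : w = L.sum) {s t : Fin L.length}
    (hst : (t : ℕ) = s + 1 ∨ (s : ℕ) = t + 1) :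
    w (c s) * L.get s (c s) ≤ (L.get s (c s) + L.get t (c s)) * L.get s (c s) := by
  have hne : s ≠ t := by rintro rfl; omega
  have hw : w (c s) = ∑ t', L.get t' (c s) := by
    rw [hsum, ← Fin.sum_univ_getElem, Finset.sum_apply]
    rfl
  calc w (c s) * L.get s (c s) = ∑ t', L.get t' (c s) * L.get s (c s) := by
        rw [hw, Finset.sum_mul]
    _ ≤ ∑ t' ∈ {s, t}, L.get t' (c s) * L.get s (c s) :=
        Finset.sum_le_sum_of_subset_of_nonpos' (Finset.subset_univ _) ?_
    _ = _ := by rw [Finset.sum_pair hne, add_mul]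
  intro t' _ ht'
  simp only [Finset.mem_insert, Finset.mem_singleton, not_or] at ht'
  by_cases h₀ : L.get t' (c s) = 0
  · simp [h₀]
  have hadj := h.adjacent_of_apply_ne_zero h₀
  have hts := Fin.val_ne_iff.mpr ht'.1
  rcases (show (t' : ℕ) = s + 1 ∨ (s : ℕ) = t' + 1 by omega) with h' | h'
  · exact mul_comm (L.get s (c s)) _ ▸ (h.oppSign s t' h').mul_nonpos _ _
  · exact (h.oppSign t' s h').mul_nonpos _ _

theorem det_neg_of_same_index (h : IsAltAlong w L c) (hsum : w = L.sum)
    {r r' : Fin L.length} (hrr : r < r') {i i' : Fin n} (hi' : (i' : ℕ) = i + 1)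
    (hr : IsDominoAt i (L.get r)) (hr' : IsDominoAt i (L.get r')) :
    L.get r i * L.get r' i' < L.get r' i * L.get r i' := by
  obtain ⟨hsucc, rfl, hci'⟩ := h.eq_succ_of_same_index hrr hr hr'
  obtain rfl : c r' = i' := Fin.ext (hci'.trans hi'.symm)
  exact mul_lt_mul_of_alternating (hr.mul_pos hi') (hr'.mul_pos hi')
    ((h.oppSign r r' hsucc).mul_nonpos _ _)
    ((h.sign_pos r).trans_le (h.mul_apply_le hsum (.inl hsucc)))
    ((h.sign_pos r').trans_le (h.mul_apply_le hsum (.inr hsucc)))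

end IsAltAlong

def DominoPrecedes (x y : Fin n → ℝ) : Prop :=
  ∃ i j : Fin n, IsPosDominoAt i x ∧ IsPosDominoAt j y ∧
    ((i : ℕ) < j ∨ i = j ∧ ∀ i' : Fin n, (i' : ℕ) = i + 1 → y i * x i' ≤ x i * y i')

theorem IsAltAlong.not_lt_of_precedes {w : Fin n → ℝ} {L : List (Fin n → ℝ)}
    {c : Fin L.length → Fin n} (h : IsAltAlong w L c) (hsum : w = L.sum) {x y : Fin n → ℝ}
    (hxy : DominoPrecedes x y) {a b : ℝ} (ha : a ≠ 0) (hb : b ≠ 0) {r r' : Fin L.length}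
    (hr : L.get r = b • y) (hr' : L.get r' = a • x) : ¬ r < r' := by
  intro hrr
  obtain ⟨i, j, hx, hy, hij | ⟨rfl, hminor⟩⟩ := hxy
  · have := h.index_le_of_lt hrr (hr ▸ hy.1.smul hb) (hr' ▸ hx.1.smul ha)
    omega
  have hdom : IsDominoAt i (L.get r) := hr ▸ hy.1.smul hb
  have hdom' : IsDominoAt i (L.get r') := hr' ▸ hx.1.smul ha
  obtain ⟨hsucc, -, hci'⟩ := h.eq_succ_of_same_index hrr hdom hdom'
  have hdet := h.det_neg_of_same_index hsum hrr hci' hdom hdom'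
  have hopp := (h.oppSign r r' hsucc).mul_nonpos i i
  have hmin := hminor (c r') hci'
  rw [hr, hr'] at hdet hopp
  simp only [Pi.smul_apply, smul_eq_mul] at hdet hopp
  have hab : a * b < 0 := lt_of_le_of_ne (by nlinarith [_root_.mul_pos hx.2 hy.2])
    (mul_ne_zero ha hb)
  nlinarith

theorem IsAltAlong.not_sublist_of_precedes {m : ℕ} {w : Fin n → ℝ} {L : List (Fin n → ℝ)}
    {c : Fin L.length → Fin n} (h : IsAltAlong w L c) (hsum : w = L.sum)
    {ds : Fin m → Fin n → ℝ} (hds : ∀ j k, j < k → DominoPrecedes (ds j) (ds k))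
    (α : Fin m → ℝ) {a b : Fin n → ℝ}
    (hab : [a, b] <+ (List.ofFn fun k => α k • ds k).filter fun x => decide (x ≠ 0)) :
    ¬ [b, a] <+ L := by
  intro hba
  have ha : a ≠ 0 := by simpa using (List.mem_filter.mp (hab.subset (by simp))).2
  have hb : b ≠ 0 := by simpa using (List.mem_filter.mp (hab.subset (by simp))).2
  obtain ⟨j, k, hjk, rfl, rfl⟩ := List.exists_lt_of_pair_sublist (hab.trans List.filter_sublist)
  obtain ⟨r, r', hrr, hr, hr'⟩ := List.exists_lt_of_pair_sublist hba
  rw [List.get_ofFn] at ha hb hr hr'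
  exact h.not_lt_of_precedes hsum (hds _ _ ((Fin.cast_lt_cast _).mpr hjk))
    (left_ne_zero_of_smul ha) (left_ne_zero_of_smul hb) hr hr' hrr

/-- Each `2 × 2` minor of `x, y ∈ V` is the same minor of a totally nonnegative basis of `V`,
times the determinant of the coordinates of `x, y` in that basis. -/
theorem IsTNNSubspace.minor_nonneg {V : Submodule ℝ (Fin n → ℝ)} (hV : IsTNNSubspace 2 n V)
    {x y : Fin n → ℝ} (hx : x ∈ V) (hy : y ∈ V) {a₀ b₀ : Fin n} (h₀ : a₀ < b₀)
    (hpos : 0 < x a₀ * y b₀ - x b₀ * y a₀) {a b : Fin n} (hab : a < b) :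
    0 ≤ x a * y b - x b * y a := by
  obtain ⟨A, -, rfl, hA⟩ := hV
  obtain ⟨p, rfl⟩ := (Submodule.mem_span_range_iff_exists_fun ℝ).mp hx
  obtain ⟨q, rfl⟩ := (Submodule.mem_span_range_iff_exists_fun ℝ).mp hy
  have hA₂ : ∀ a b : Fin n, a < b → 0 ≤ A 0 a * A 1 b - A 0 b * A 1 a := fun a b hab => by
    simpa [Matrix.det_fin_two] using hA ![a, b] (Fin.strictMono_iff_lt_succ.mpr (by simpa))
  have hminor : ∀ a b : Fin n, (∑ i, p i • A i) a * (∑ i, q i • A i) b -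
      (∑ i, p i • A i) b * (∑ i, q i • A i) a =
        (p 0 * q 1 - p 1 * q 0) * (A 0 a * A 1 b - A 0 b * A 1 a) := fun a b => by
    simp only [Fin.sum_univ_two, Pi.add_apply, Pi.smul_apply, smul_eq_mul]
    ring
  rw [hminor] at hpos ⊢
  exact mul_nonneg (pos_of_mul_pos_left hpos (hA₂ a₀ b₀ h₀)).le (hA₂ a b hab)

theorem OrthodoxWith.minor_nonneg {V : Submodule ℝ (Fin n → ℝ)} (hV : IsTNNSubspace 2 n V)
    {d e d1 d2 d3 d4 : Fin n → ℝ} (h : OrthodoxWith V d e d1 d2 d3 d4) ⦃a b : Fin n⦄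
    (hab : a < b) : 0 ≤ d a * e b - d b * e a := by
  obtain ⟨⟨i1, i2, i3, i4, h1, h2, h3, h4, o12, o23, o34, o4⟩, -, rfl, hd, hd_last, he,
    he_last⟩ := h
  set last : Fin n := ⟨n - 1, by omega⟩
  have hd_i1 : d i1 = d1 i1 := by
    simpa [barVec, show (i1 : ℕ) ≠ n - 1 by omega, h2.1.apply_eq_zero (c := i1) (by omega)
      (by omega)] using congrFun hd i1
  have he_i1 : e i1 = 0 := by
    simpa [barVec, show (i1 : ℕ) ≠ n - 1 by omega, h3.1.apply_eq_zero (c := i1) (by omega)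
      (by omega), h4.1.apply_eq_zero (c := i1) (by omega) (by omega)] using congrFun he i1
  refine hV.minor_nonneg (Submodule.subset_span (by simp)) (Submodule.subset_span (by simp))
    (a₀ := i1) (b₀ := last) (Fin.lt_def.mpr (by simp [last]; omega)) ?_ hab
  rw [hd_i1, he_i1]
  nlinarith [h1.2, hd_last last rfl, he_last last rfl]

theorem DeviantWith.minor_nonneg {V : Submodule ℝ (Fin n → ℝ)} (hV : IsTNNSubspace 2 n V)
    {d e d1 d2 d3 d4 : Fin n → ℝ} (h : DeviantWith V d e d1 d2 d3 d4) ⦃a b : Fin n⦄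
    (hab : a < b) : 0 ≤ d a * e b - d b * e a := by
  obtain ⟨⟨i1, i2, i3, i4, h1, h2, h3, h4, o12, o23, o34, o4⟩, -, rfl, -, hd_last, rfl⟩ := h
  set last : Fin n := ⟨n - 1, by omega⟩
  have he_i1 : (d1 + d2 + d3) i1 = d1 i1 := by
    simp [h2.1.apply_eq_zero (c := i1) (by omega) (by omega),
      h3.1.apply_eq_zero (c := i1) (by omega) (by omega)]
  have he_last : (d1 + d2 + d3) last = 0 := by
    simp [h1.1.apply_eq_zero (c := last) (by simp [last]; omega) (by simp [last]; omega),
      h2.1.apply_eq_zero (c := last) (by simp [last]; omega) (by simp [last]; omega),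
      h3.1.apply_eq_zero (c := last) (by simp [last]; omega) (by simp [last]; omega)]
  refine hV.minor_nonneg (Submodule.subset_span (by simp)) (Submodule.subset_span (by simp))
    (a₀ := i1) (b₀ := last) (Fin.lt_def.mpr (by simp [last]; omega)) ?_ hab
  rw [he_i1, he_last]
  nlinarith [h1.2, hd_last last rfl]

theorem OrthodoxWith.precedes {V : Submodule ℝ (Fin n → ℝ)} (hV : IsTNNSubspace 2 n V)
    {d e d1 d2 d3 d4 : Fin n → ℝ} (h : OrthodoxWith V d e d1 d2 d3 d4) (j k : Fin 4)
    (hjk : j < k) : DominoPrecedes (![d1, d2, d3, d4] j) (![d1, d2, d3, d4] k) := by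
  have hminor := h.minor_nonneg hV
  obtain ⟨⟨i1, i2, i3, i4, h1, h2, h3, h4, o12, o23, o34, o4⟩, -, -, hd, -, he, -⟩ := h
  have h23 : DominoPrecedes d2 d3 := by
    refine ⟨i2, i3, h2, h3, o23.lt_or_eq.imp_right fun heq => ?_⟩
    obtain rfl : i2 = i3 := Fin.ext heq
    refine ⟨rfl, fun c hc => ?_⟩
    have hd' : ∀ c : Fin n, (c : ℕ) ≠ n - 1 → d c = d1 c + d2 c := fun c hc => by
      simpa [barVec, hc] using congrFun hd c
    have he' : ∀ c : Fin n, (c : ℕ) ≠ n - 1 → e c = d3 c + d4 c := fun c hc => by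
      simpa [barVec, hc] using congrFun he c
    have := hminor (a := i2) (b := c) (Fin.lt_def.mpr (by omega))
    rw [hd' i2 (by omega), hd' c (by omega), he' i2 (by omega), he' c (by omega),
      h1.1.apply_eq_zero (c := i2) (by omega) (by omega),
      h1.1.apply_eq_zero (c := c) (by omega) (by omega),
      h4.1.apply_eq_zero (c := i2) (by omega) (by omega),
      h4.1.apply_eq_zero (c := c) (by omega) (by omega)] at this
    linarith
  fin_cases j <;> fin_cases k <;> simp at hjk ⊢
  exacts [⟨i1, i2, h1, h2, .inl (by omega)⟩, ⟨i1, i3, h1, h3, .inl (by omega)⟩,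
    ⟨i1, i4, h1, h4, .inl (by omega)⟩, h23, ⟨i2, i4, h2, h4, .inl (by omega)⟩,
    ⟨i3, i4, h3, h4, .inl (by omega)⟩]

theorem DeviantWith.precedes {V : Submodule ℝ (Fin n → ℝ)} (hV : IsTNNSubspace 2 n V)
    {d e d1 d2 d3 d4 : Fin n → ℝ} (h : DeviantWith V d e d1 d2 d3 d4) (j k : Fin 4)
    (hjk : j < k) : DominoPrecedes (![d1, d2, d3, d4] j) (![d1, d2, d3, d4] k) := by
  have hminor := h.minor_nonneg hV
  obtain ⟨⟨i1, i2, i3, i4, h1, h2, h3, h4, o12, o23, o34, o4⟩, -, -, hd, -, rfl⟩ := h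
  have h34 : DominoPrecedes d3 d4 := by
    refine ⟨i3, i4, h3, h4, o34.lt_or_eq.imp_right fun heq => ?_⟩
    obtain rfl : i3 = i4 := Fin.ext heq
    refine ⟨rfl, fun c hc => ?_⟩
    have hd' : ∀ c : Fin n, (c : ℕ) ≠ n - 1 → d c = d1 c - d4 c := fun c hc => by
      simpa [barVec, hc] using congrFun hd c
    have := hminor (a := i3) (b := c) (Fin.lt_def.mpr (by omega))
    rw [hd' i3 (by omega), hd' c (by omega)] at this
    simp only [Pi.add_apply,
      h1.1.apply_eq_zero (c := i3) (by omega) (by omega),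
      h1.1.apply_eq_zero (c := c) (by omega) (by omega),
      h2.1.apply_eq_zero (c := i3) (by omega) (by omega),
      h2.1.apply_eq_zero (c := c) (by omega) (by omega)] at this
    linarith
  fin_cases j <;> fin_cases k <;> simp at hjk ⊢
  exacts [⟨i1, i2, h1, h2, .inl (by omega)⟩, ⟨i1, i3, h1, h3, .inl (by omega)⟩,
    ⟨i1, i4, h1, h4, .inl (by omega)⟩, ⟨i2, i3, h2, h3, .inl (by omega)⟩,
    ⟨i2, i4, h2, h4, .inl (by omega)⟩, h34]

end Domino

theorem alt_seq_is_shuffle_general (n : ℕ) (V V' : Submodule ℝ (Fin n → ℝ))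
    (hV : IsTNNSubspace 2 n V) (hV' : IsTNNSubspace 2 n V')
    (d e d1 d2 d3 d4 d' e' d1' d2' d3' d4' : Fin n → ℝ)
    (hOD : OrthodoxWith V d e d1 d2 d3 d4 ∨ DeviantWith V d e d1 d2 d3 d4)
    (hOD' : OrthodoxWith V' d' e' d1' d2' d3' d4' ∨
      DeviantWith V' d' e' d1' d2' d3' d4')
    (v v' : Fin n → ℝ)
    (α α' : Fin 4 → ℝ)
    (hα : barVec v = α 0 • d1 + α 1 • d2 + α 2 • d3 + α 3 • d4)
    (hα' : barVec v' = α' 0 • d1' + α' 1 • d2' + α' 2 • d3' + α' 3 • d4')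
    (I : Finset (Fin n)) (L : List (Fin n → ℝ))
    (hL : IsAltDominoSeq
      (↑((domSeq α d1 d2 d3 d4 ++ domSeq α' d1' d2' d3' d4').filter
          (fun x => decide (x ≠ 0))))
      (barVec (v + v')) I L)
    (hall : (↑L : Multiset (Fin n → ℝ)) =
      (↑((domSeq α d1 d2 d3 d4 ++ domSeq α' d1' d2' d3' d4').filter
          (fun x => decide (x ≠ 0))))) :
    ∃ M : List (Fin n → ℝ),
      Shuffle (domSeq α d1 d2 d3 d4) (domSeq α' d1' d2' d3' d4') M ∧
      L = M.filter (fun x => decide (x ≠ 0)) := by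
  have hsum : barVec (v + v') = L.sum := by
    rw [barVec_add, hα, hα', ← Multiset.sum_coe, hall, Multiset.sum_coe, List.sum_filter_ne_zero]
    simp [domSeq]
    abel
  have hprec := hOD.elim (OrthodoxWith.precedes hV) (DeviantWith.precedes hV)
  have hprec' := hOD'.elim (OrthodoxWith.precedes hV') (DeviantWith.precedes hV')
  have hperm : L.Perm ((domSeq α d1 d2 d3 d4).filter (fun x => decide (x ≠ 0)) ++
      (domSeq α' d1' d2' d3' d4').filter (fun x => decide (x ≠ 0))) := by
    rw [← List.filter_append]
    exact Multiset.coe_eq_coe.mp hall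
  obtain ⟨M, hM, hMf⟩ := Shuffle.exists_filter_eq _ <|
    Shuffle.of_perm_of_forall_not_sublist hperm
      (fun _ _ => hL.isAltAlong.not_sublist_of_precedes hsum hprec α)
      (fun _ _ => hL.isAltAlong.not_sublist_of_precedes hsum hprec' α')
  exact ⟨M, hM, hMf.symm⟩

/-- Lemma 10.8: let `v ∈ V`, `v' ∈ V'` (each orthodox or deviant) with
`Dom_V(v)`, `Dom_{V'}(v')` the corresponding domino sequences, and let `D` be the
multiset of nonzero dominoes among their eight entries (whose sum is the vector
`v + v'` with last coordinate zeroed). Then any `I`-alternating domino sequence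
for this sum with respect to `D` using all dominoes of `D` is obtained by shuffling
`Dom_V(v)` and `Dom_{V'}(v')` and deleting the zero dominoes. -/
theorem alt_seq_is_shuffle (n : ℕ) (V V' : Submodule ℝ (Fin n → ℝ))
    (hV : IsTNNSubspace 2 n V) (hV' : IsTNNSubspace 2 n V')
    (d e d1 d2 d3 d4 d' e' d1' d2' d3' d4' : Fin n → ℝ)
    (hOD : OrthodoxWith V d e d1 d2 d3 d4 ∨ DeviantWith V d e d1 d2 d3 d4)
    (hOD' : OrthodoxWith V' d' e' d1' d2' d3' d4' ∨
      DeviantWith V' d' e' d1' d2' d3' d4')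
    (v v' : Fin n → ℝ) (hv : v ∈ V) (hv' : v' ∈ V')
    (α α' : Fin 4 → ℝ)
    (hα : barVec v = α 0 • d1 + α 1 • d2 + α 2 • d3 + α 3 • d4)
    (hα' : barVec v' = α' 0 • d1' + α' 1 • d2' + α' 2 • d3' + α' 3 • d4')
    (I : Finset (Fin n)) (L : List (Fin n → ℝ))
    (hL : IsAltDominoSeq
      (↑((domSeq α d1 d2 d3 d4 ++ domSeq α' d1' d2' d3' d4').filter
          (fun x => decide (x ≠ 0))))
      (barVec (v + v')) I L)
    (hall : (↑L : Multiset (Fin n → ℝ)) =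
      (↑((domSeq α d1 d2 d3 d4 ++ domSeq α' d1' d2' d3' d4').filter
          (fun x => decide (x ≠ 0))))) :
    ∃ M : List (Fin n → ℝ),
      Shuffle (domSeq α d1 d2 d3 d4) (domSeq α' d1' d2' d3' d4') M ∧
      L = M.filter (fun x => decide (x ≠ 0)) :=
  alt_seq_is_shuffle_general n V V' hV hV' d e d1 d2 d3 d4 d' e' d1' d2' d3' d4' hOD hOD' v v' α α'
    hα hα' I L hL hall
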